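/- arXiv:2107.01440 — 3 statements merged into one kernel-verified Lean document; each statement's English description precedes it below -/
import Mathlib

section
/- For every V = (V1,V2,V3) ∈ ℝ³ and every θ ∈ ℝ, one has S[L[V](θ)] = P[V]; in particular the value is independent of θ. Here S[w] := −w3(w1²+w2²) + √3·w2·w4·w5 + (1/2)·w3(w4²+w5²) + (1/3)·w3³ + (√3/2)·w1(w4²−w5²) for w = (w1,...,w5) ∈ ℝ⁵, and P[u] := −u1²u2 + (√3/2)·u1·u3² + (1/3)·u2³ + (1/2)·u2·u3² for u = (u1,u2,u3) ∈ ℝ³. -/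
/-- The degree-3 polynomial `S` on `ℝ⁵`. -/
noncomputable def Spoly (w1 w2 w3 w4 w5 : ℝ) : ℝ :=
  -w3 * (w1 ^ 2 + w2 ^ 2) + Real.sqrt 3 * w2 * w4 * w5
    + (1 / 2) * w3 * (w4 ^ 2 + w5 ^ 2) + (1 / 3) * w3 ^ 3
    + (Real.sqrt 3 / 2) * w1 * (w4 ^ 2 - w5 ^ 2)

/-- The degree-3 polynomial `P` on `ℝ³`. -/
noncomputable def Ppoly (u1 u2 u3 : ℝ) : ℝ :=
  -u1 ^ 2 * u2 + (Real.sqrt 3 / 2) * u1 * u3 ^ 2 + (1 / 3) * u2 ^ 3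
    + (1 / 2) * u2 * u3 ^ 2

/-- For every `V ∈ ℝ³` and every `θ`, `S[L[V](θ)] = P[V]`; in particular the value
is independent of `θ`. -/
theorem S_comp_augmented_eq_P (V1 V2 V3 θ : ℝ) :
    Spoly (V1 * Real.cos (2 * θ)) (V1 * Real.sin (2 * θ)) V2
        (V3 * Real.cos θ) (V3 * Real.sin θ)
      = Ppoly V1 V2 V3 := by
  have h := Real.sin_sq_add_cos_sq θ
  simp only [Spoly, Ppoly, Real.cos_two_mul', Real.sin_two_mul]
  linear_combination (-V1 ^ 2 * V2 * (Real.sin θ ^ 2 + Real.cos θ ^ 2 + 1)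
      + Real.sqrt 3 * V1 * V3 ^ 2 * (Real.sin θ ^ 2 + Real.cos θ ^ 2 + 1) / 2
      + V2 * V3 ^ 2 / 2) * h
end

section
/- For every u = (u1,u2,u3) ∈ ℝ³, the cubic polynomial P[u] := −u1²u2 + (√3/2)·u1·u3² + (1/3)·u2³ + (1/2)·u2·u3² satisfies P[u] ≤ (1/3)·(u1² + u2² + u3²)^{3/2}. In particular, P[u] ≤ 1/3 whenever |u| = 1. -/
/-- The cubic polynomial `P[u]` satisfies `P[u] ≤ (1/3)·|u|³`; in particular
`P[u] ≤ 1/3` whenever `|u| = 1`. -/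
theorem P_le_norm_cubed (u1 u2 u3 : ℝ) :
    (-u1 ^ 2 * u2 + (Real.sqrt 3 / 2) * u1 * u3 ^ 2 + (1 / 3) * u2 ^ 3
        + (1 / 2) * u2 * u3 ^ 2)
      ≤ (1 / 3) * (u1 ^ 2 + u2 ^ 2 + u3 ^ 2) ^ ((3 : ℝ) / 2) ∧
    (u1 ^ 2 + u2 ^ 2 + u3 ^ 2 = 1 →
      (-u1 ^ 2 * u2 + (Real.sqrt 3 / 2) * u1 * u3 ^ 2 + (1 / 3) * u2 ^ 3
          + (1 / 2) * u2 * u3 ^ 2) ≤ 1 / 3) := by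
  have ha2 : Real.sqrt 3 ^ 2 = 3 := Real.sq_sqrt (by norm_num)
  have ha : (0 : ℝ) ≤ Real.sqrt 3 := Real.sqrt_nonneg 3
  set a := Real.sqrt 3 with ha_def
  set s := u1 ^ 2 + u2 ^ 2 + u3 ^ 2 with hs_def
  have hs : (0 : ℝ) ≤ s := by positivity
  set r := Real.sqrt s with hr_def
  have hr : (0 : ℝ) ≤ r := Real.sqrt_nonneg s
  have hr2 : r ^ 2 = s := Real.sq_sqrt hs
  set p := (u2 + a * u1) / 2 with hp_def
  have hp2 : p ^ 2 ≤ r ^ 2 := by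
    rw [hr2, hp_def, hs_def]
    nlinarith [sq_nonneg (a * u2 - u1), sq_nonneg u3, ha2]
  have hpr : -r ≤ p := by nlinarith
  have hmain : (-u1 ^ 2 * u2 + (a / 2) * u1 * u3 ^ 2 + (1 / 3) * u2 ^ 3
      + (1 / 2) * u2 * u3 ^ 2) ≤ (1 / 3) * r ^ 3 := by
    have hP : (-u1 ^ 2 * u2 + (a / 2) * u1 * u3 ^ 2 + (1 / 3) * u2 ^ 3
        + (1 / 2) * u2 * u3 ^ 2) = p * r ^ 2 - (4 / 3) * p ^ 3 := by
      rw [hr2, hp_def, hs_def]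
      linear_combination ((1/2) * u1 ^ 2 * u2 + (1/6) * a * u1 ^ 3) * ha2
    rw [hP]
    nlinarith [mul_nonneg (sq_nonneg (r - 2 * p)) (by linarith : (0:ℝ) ≤ r + p)]
  have hpow : s ^ ((3 : ℝ) / 2) = r ^ 3 := by
    rw [hr_def, Real.sqrt_eq_rpow, ← Real.rpow_natCast (s ^ ((1:ℝ)/2)) 3,
      ← Real.rpow_mul hs]
    norm_num
  constructor
  · rw [hpow]; linarith [hmain]
  · intro h1
    have : r = 1 := by rw [hr_def, h1, Real.sqrt_one]
    rw [this] at hmain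
    linarith [hmain]
end

section
/- For any real symmetric traceless 3×3 matrix A, one has √6 · tr(A³) ≤ (tr(A²))^{3/2}. -/
open Matrix

lemma key_cube_aux (x y z : ℝ) (h : x + y + z = 0) :
    Real.sqrt 6 * (x^3+y^3+z^3) ≤ (x^2+y^2+z^2) ^ ((3:ℝ)/2) := by
  have hs : (0:ℝ) ≤ x^2+y^2+z^2 := by positivity
  have hrhs : (x^2+y^2+z^2) ^ ((3:ℝ)/2) = Real.sqrt ((x^2+y^2+z^2)^3) := by
    rw [show (3:ℝ)/2 = ((3:ℕ):ℝ) * (1/2) by norm_num, Real.rpow_mul hs, Real.rpow_natCast,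
      Real.sqrt_eq_rpow]
  rw [hrhs]
  have key : 6 * (x^3+y^3+z^3)^2 ≤ (x^2+y^2+z^2)^3 := by
    have hz : z = -(x+y) := by linarith
    subst hz
    nlinarith [sq_nonneg ((x-y)*(x+2*y)*(2*x+y))]
  rcases le_or_gt (x^3+y^3+z^3) 0 with ht | ht
  · exact le_trans (mul_nonpos_of_nonneg_of_nonpos (Real.sqrt_nonneg 6) ht) (Real.sqrt_nonneg _)
  · have h1 : Real.sqrt 6 * (x^3+y^3+z^3) = Real.sqrt (6 * (x^3+y^3+z^3)^2) := by
      rw [Real.sqrt_mul (by norm_num), Real.sqrt_sq ht.le]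
    rw [h1]
    exact Real.sqrt_le_sqrt key

/-- For any real symmetric traceless 3×3 matrix `A`, `√6 · tr(A³) ≤ (tr(A²))^{3/2}`. -/
theorem sqrt6_trace_cube_le (A : Matrix (Fin 3) (Fin 3) ℝ)
    (hsymm : Aᵀ = A) (htr : A.trace = 0) :
    Real.sqrt 6 * (A * A * A).trace ≤ ((A * A).trace) ^ ((3 : ℝ) / 2) := by
  have hA : A.IsHermitian := by
    rw [Matrix.IsHermitian, Matrix.conjTranspose]
    convert hsymm using 1
    ext i j
    simp
  set U : Matrix (Fin 3) (Fin 3) ℝ := (hA.eigenvectorUnitary : Matrix (Fin 3) (Fin 3) ℝ) with hU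
  set D : Matrix (Fin 3) (Fin 3) ℝ := diagonal (RCLike.ofReal ∘ hA.eigenvalues) with hD
  have hUU : star U * U = 1 := (Matrix.mem_unitaryGroup_iff').mp hA.eigenvectorUnitary.2
  have hspec : A = U * D * star U := hA.spectral_theorem
  have hcancel : ∀ X : Matrix (Fin 3) (Fin 3) ℝ, star U * (U * X) = X := fun X => by
    rw [← Matrix.mul_assoc, hUU, Matrix.one_mul]
  have h2 : A * A = U * (D * D) * star U := by
    rw [hspec]; simp only [Matrix.mul_assoc, hcancel]
  have h3 : A * A * A = U * (D * D * D) * star U := by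
    rw [h2, hspec]; simp only [Matrix.mul_assoc, hcancel]
  have htrc : ∀ X : Matrix (Fin 3) (Fin 3) ℝ, (U * X * star U).trace = X.trace := fun X => by
    rw [Matrix.trace_mul_cycle, hUU, Matrix.one_mul]
  have htr1 : A.trace = ∑ i, hA.eigenvalues i := by
    conv_lhs => rw [hspec]
    rw [htrc, hD, Matrix.trace_diagonal]
    simp
  have htr3 : (A * A * A).trace = ∑ i, hA.eigenvalues i ^ 3 := by
    rw [h3, htrc, hD, Matrix.diagonal_mul_diagonal, Matrix.diagonal_mul_diagonal,
      Matrix.trace_diagonal]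
    simp [pow_succ, mul_assoc]
  have htr2 : (A * A).trace = ∑ i, hA.eigenvalues i ^ 2 := by
    rw [h2, htrc, hD, Matrix.diagonal_mul_diagonal, Matrix.trace_diagonal]
    simp [sq]
  rw [htr2, htr3]
  rw [htr1] at htr
  simp only [Fin.sum_univ_three] at htr ⊢
  exact key_cube_aux _ _ _ htr
end
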